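/- Fix a real number a with 0 < a < 1, a constant 0 < C < 1, an integer t ≥ 1, and ε' with 0 < ε' < 1 − P(t), and for each n let k(n) be any integer with k(n) ≥ (10t + n²t − nt + n + log₂(1/ε')) / log₂(1/(1+(C−1)a)). Then the quantity η(n) = (P(t) + ε')/(1 − a^{k(n)})^{n−1} + (1 − (1 − a^{k(n)})^{n−1})/(1 − a^{k(n)})^{n−1} converges to P(t) + ε' as n → ∞. -/

import Mathlib

open MeasureTheory Matrix
open scoped Classical ComplexOrder

noncomputable section

/-- The spectral-gap bound
`P(t) = (1 + (1/2)·(425·⌊log₂(4t)⌋²·t⁵·t^{3.1/ln 2})⁻¹)^{-1/3}`. -/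
def Pgap (t : ℕ) : ℝ :=
  (1 + (1 / 2) * (425 * ((⌊Real.logb 2 (4 * t)⌋ : ℤ) : ℝ) ^ 2 * (t : ℝ) ^ 5 *
      (t : ℝ) ^ ((3.1 : ℝ) / Real.log 2))⁻¹) ^ (-(1 / 3 : ℝ))

/-!
The hypothesis on `k` makes `k n` grow at least linearly in `n` (the denominator
`log₂(1/(1+(C−1)a))` is positive), so `n · a^{k n} → 0`.  Bernoulli's inequality
`(1 − x)^{n−1} ≥ 1 − (n−1)x` then gives `f n := (1 − a^{k n})^{n−1} → 1`, and
`η(n) = c / f n + (1 − f n) / f n` tends to `c` for any constant `c`.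
-/

open Filter Topology

theorem tendsto_div_add_one_sub_div {α : Type*} {l : Filter α} {f : α → ℝ}
    (hf : Tendsto f l (𝓝 1)) (c : ℝ) :
    Tendsto (fun x => c / f x + (1 - f x) / f x) l (𝓝 c) := by
  simpa using ((tendsto_const_nhds (x := c)).div hf one_ne_zero).add
    (((tendsto_const_nhds (x := (1 : ℝ))).sub hf).div hf one_ne_zero)

theorem tendsto_one_sub_pow_pred_of_tendsto_mul {x : ℕ → ℝ} (hx0 : ∀ n, 0 ≤ x n)
    (hx1 : ∀ n, x n ≤ 1) (hx : Tendsto (fun n : ℕ => n * x n) atTop (𝓝 0)) :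
    Tendsto (fun n : ℕ => (1 - x n) ^ (n - 1)) atTop (𝓝 1) := by
  have hlow : Tendsto (fun n : ℕ => 1 - n * x n) atTop (𝓝 1) := by
    simpa using tendsto_const_nhds.sub hx
  refine tendsto_of_tendsto_of_tendsto_of_le_of_le hlow tendsto_const_nhds (fun n => ?_)
    (fun n => pow_le_one₀ (by linarith [hx1 n]) (by linarith [hx0 n]))
  have hpred : ((n - 1 : ℕ) : ℝ) ≤ n := by exact_mod_cast n.sub_le 1
  calc 1 - n * x n ≤ 1 + ((n - 1 : ℕ) : ℝ) * -x n := by nlinarith [hx0 n]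
    _ ≤ (1 + -x n) ^ (n - 1) := one_add_mul_le_pow (by linarith [hx1 n]) _
    _ = (1 - x n) ^ (n - 1) := by rw [sub_eq_add_neg]

theorem tendsto_natCast_mul_pow_of_linear_le {a b c : ℝ} (ha0 : 0 < a) (ha1 : a < 1)
    (hb : 0 < b) {k : ℕ → ℕ} (hk : ∀ n : ℕ, b * n + c ≤ k n) :
    Tendsto (fun n : ℕ => n * a ^ k n) atTop (𝓝 0) := by
  have hpow_le : ∀ n : ℕ, a ^ k n ≤ a ^ c * (a ^ b) ^ n := fun n => calc
    a ^ k n = a ^ (k n : ℝ) := (Real.rpow_natCast a _).symm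
    _ ≤ a ^ (b * n + c) := Real.rpow_le_rpow_of_exponent_ge ha0 ha1.le (hk n)
    _ = a ^ c * (a ^ b) ^ n := by
      rw [Real.rpow_add ha0, Real.rpow_mul ha0.le, Real.rpow_natCast, mul_comm]
  have hgeom : Tendsto (fun n : ℕ => a ^ c * (n * (a ^ b) ^ n)) atTop (𝓝 0) := by
    simpa using (tendsto_self_mul_const_pow_of_lt_one (Real.rpow_nonneg ha0.le b)
      (Real.rpow_lt_one ha0.le ha1 hb)).const_mul (a ^ c)
  refine squeeze_zero (fun n => by positivity) (fun n => ?_) hgeom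
  rw [mul_left_comm]
  exact mul_le_mul_of_nonneg_left (hpow_le n) n.cast_nonneg

theorem eta_tendsto_Pgap_add_eps_general
    (a C : ℝ) (ha0 : 0 < a) (ha1 : a < 1) (hC0 : 0 < C) (hC1 : C < 1)
    (t : ℕ) (ε' : ℝ)
    (k : ℕ → ℕ)
    (hk : ∀ n : ℕ,
      (10 * t + (n : ℝ) ^ 2 * t - n * t + n + Real.logb 2 (1 / ε')) /
        Real.logb 2 (1 / (1 + (C - 1) * a)) ≤ (k n : ℝ)) :
    Filter.Tendsto
      (fun n : ℕ =>
        (Pgap t + ε') / (1 - a ^ k n) ^ (n - 1)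
          + (1 - (1 - a ^ k n) ^ (n - 1)) / (1 - a ^ k n) ^ (n - 1))
      Filter.atTop (nhds (Pgap t + ε')) := by
  set D := Real.logb 2 (1 / (1 + (C - 1) * a))
  have hD : 0 < D := Real.logb_pos one_lt_two (by rw [lt_div_iff₀ (by nlinarith)]; nlinarith)
  have hlin : ∀ n : ℕ, D⁻¹ * n + (10 * t + Real.logb 2 (1 / ε')) / D ≤ k n := fun n => by
    refine le_trans ?_ (hk n)
    rw [inv_mul_eq_div, ← add_div]
    refine div_le_div_of_nonneg_right ?_ hD.le
    have hn_le_sq : (n : ℝ) ≤ n ^ 2 := by exact_mod_cast Nat.le_self_pow two_ne_zero n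
    nlinarith [mul_nonneg (sub_nonneg.2 hn_le_sq) t.cast_nonneg]
  exact tendsto_div_add_one_sub_div (tendsto_one_sub_pow_pred_of_tendsto_mul
    (fun n => pow_nonneg ha0.le _) (fun n => pow_le_one₀ ha0.le ha1.le)
    (tendsto_natCast_mul_pow_of_linear_le ha0 ha1 (inv_pos.2 hD) hlin)) _

/-- for fixed `0 < a < 1`, `0 < C < 1`, `t ≥ 1` and `0 < ε' < 1 − P(t)`, if for
each `n` the integer `k n` satisfies
`k n ≥ (10t + n²t − nt + n + log₂(1/ε')) / log₂(1/(1+(C−1)a))`, then the TPE constant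
`η(n) = (P(t) + ε')/(1 − a^{k n})^{n−1} + (1 − (1 − a^{k n})^{n−1})/(1 − a^{k n})^{n−1}`
converges to `P(t) + ε'` as `n → ∞`. -/
theorem eta_tendsto_Pgap_add_eps
    (a C : ℝ) (ha0 : 0 < a) (ha1 : a < 1) (hC0 : 0 < C) (hC1 : C < 1)
    (t : ℕ) (ht : 1 ≤ t) (ε' : ℝ) (hε'0 : 0 < ε') (hε'1 : ε' < 1 - Pgap t)
    (k : ℕ → ℕ)
    (hk : ∀ n : ℕ,
      (10 * t + (n : ℝ) ^ 2 * t - n * t + n + Real.logb 2 (1 / ε')) /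
        Real.logb 2 (1 / (1 + (C - 1) * a)) ≤ (k n : ℝ)) :
    Filter.Tendsto
      (fun n : ℕ =>
        (Pgap t + ε') / (1 - a ^ k n) ^ (n - 1)
          + (1 - (1 - a ^ k n) ^ (n - 1)) / (1 - a ^ k n) ^ (n - 1))
      Filter.atTop (nhds (Pgap t + ε')) :=
  eta_tendsto_Pgap_add_eps_general a C ha0 ha1 hC0 hC1 t ε' k hk

end
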